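/- arXiv:2005.14296 — 7 statements merged into one kernel-verified Lean document; each statement's English description precedes it below -/
import Mathlib

section
/- Fix ρ0 > 0. The function ρ1 ↦ (1/2) Σ_{n ∈ ℕ} |e^{−ρ0} ρ0^n / n! − e^{−ρ1} ρ1^n / n!| (the total variation distance between Poisson(ρ0) and Poisson(ρ1)) is monotone increasing on [ρ0, ∞); equivalently, the MAP error probability P_e(ρ0, ρ1) = 1/2 − (1/4) Σ_{n ∈ ℕ} |e^{−ρ0} ρ0^n / n! − e^{−ρ1} ρ1^n / n!| is a decreasing function of ρ1 on [ρ0, ∞). -/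
/-!
The likelihood ratio `p_x(n) / p_{ρ₀}(n) = e^{ρ₀ - x} (x / ρ₀)^n` is increasing in `n` when
`x ≥ ρ₀`, so `p_{ρ₀} - p_x` is nonnegative on an initial segment `{n < k}` and nonpositive
after it. Hence `Σ |p_{ρ₀} - p_x| = 2 (P_{ρ₀}(N < k) - P_x(N < k))`, whereas for every `y` the
same expression with `y` in place of `x` is a lower bound for `Σ |p_{ρ₀} - p_y|`. Since the
Poisson distribution function `ρ ↦ P_ρ(N < k)` is decreasing (its derivative is
`-p_ρ(k - 1)`), replacing `x` by any `y ≥ x` can only increase the distance.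
-/

open Finset Set

section TotalVariation

variable {α : Type*} {d : α → ℝ}

lemma hasSum_two_mul_ite_sub (hd : HasSum d 0) (s : Finset α) [DecidablePred (· ∈ s)] :
    HasSum (fun a => 2 * (if a ∈ s then d a else 0) - d a) (2 * ∑ a ∈ s, d a) := by
  have hs : HasSum (fun a => if a ∈ s then d a else 0) (∑ a ∈ s, d a) := by
    rw [← sum_congr rfl fun a ha => if_pos ha]
    exact hasSum_sum_of_ne_finset_zero fun a ha => if_neg ha
  simpa using (hs.mul_left 2).sub hd

lemma two_mul_sum_le_tsum_abs (hd : HasSum d 0) (s : Finset α) :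
    2 * ∑ a ∈ s, d a ≤ ∑' a, |d a| := by
  classical
  refine hasSum_le (fun a => ?_) (hasSum_two_mul_ite_sub hd s) hd.summable.abs.hasSum
  split_ifs
  · linarith [le_abs_self (d a)]
  · linarith [neg_le_abs (d a)]

lemma tsum_abs_eq_two_mul_sum (hd : HasSum d 0) {s : Finset α}
    (hs : ∀ a ∈ s, 0 ≤ d a) (hsc : ∀ a ∉ s, d a ≤ 0) :
    ∑' a, |d a| = 2 * ∑ a ∈ s, d a := by
  classical
  refine ((hasSum_two_mul_ite_sub hd s).congr_fun fun a => ?_).tsum_eq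
  by_cases ha : a ∈ s
  · rw [if_pos ha, abs_of_nonneg (hs a ha)]; ring
  · rw [if_neg ha, abs_of_nonpos (hsc a ha)]; ring

end TotalVariation

noncomputable def poissonMass (ρ : ℝ) (n : ℕ) : ℝ :=
  Real.exp (-ρ) * ρ ^ n / n.factorial

lemma hasSum_poissonMass (ρ : ℝ) : HasSum (poissonMass ρ) 1 := by
  have h := (NormedSpace.expSeries_div_hasSum_exp ρ).mul_left (Real.exp (-ρ))
  rw [← Real.exp_eq_exp_ℝ, ← Real.exp_add, neg_add_cancel, Real.exp_zero] at h
  unfold poissonMass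
  simpa only [mul_div_assoc] using h

lemma hasSum_poissonMass_sub (ρ σ : ℝ) :
    HasSum (fun n => poissonMass ρ n - poissonMass σ n) 0 := by
  simpa using (hasSum_poissonMass ρ).sub (hasSum_poissonMass σ)

lemma poissonMass_nonneg {ρ : ℝ} (hρ : 0 ≤ ρ) (n : ℕ) : 0 ≤ poissonMass ρ n := by
  unfold poissonMass; positivity

lemma poissonMass_succ (ρ : ℝ) (n : ℕ) :
    poissonMass ρ (n + 1) = poissonMass ρ n * (ρ / (n + 1)) := by
  simp only [poissonMass, Nat.factorial_succ, Nat.cast_mul, Nat.cast_succ, pow_succ]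
  field_simp

lemma poissonMass_le_of_le {ρ σ : ℝ} (hρ : 0 ≤ ρ) (hρσ : ρ ≤ σ) {k : ℕ}
    (hk : poissonMass ρ k ≤ poissonMass σ k) {n : ℕ} (hn : k ≤ n) :
    poissonMass ρ n ≤ poissonMass σ n := by
  induction n, hn using Nat.le_induction with
  | base => exact hk
  | succ n _ ih =>
    rw [poissonMass_succ, poissonMass_succ]
    exact mul_le_mul ih (by gcongr) (by positivity) ((poissonMass_nonneg hρ n).trans ih)

lemma hasDerivAt_poissonMass_zero (ρ : ℝ) :
    HasDerivAt (fun ρ => poissonMass ρ 0) (-poissonMass ρ 0) ρ := by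
  simpa [poissonMass] using (hasDerivAt_neg ρ).exp

lemma hasDerivAt_poissonMass_succ (ρ : ℝ) (n : ℕ) :
    HasDerivAt (fun ρ => poissonMass ρ (n + 1)) (poissonMass ρ n - poissonMass ρ (n + 1)) ρ := by
  have h := (((hasDerivAt_neg ρ).exp).mul (hasDerivAt_pow (n + 1) ρ)).div_const
    ((n + 1).factorial : ℝ)
  refine h.congr_deriv ?_
  simp only [poissonMass, Nat.factorial_succ, Nat.cast_mul, Nat.cast_succ, pow_succ,
    Nat.add_sub_cancel]
  field_simp
  ring

lemma hasDerivAt_sum_range_poissonMass (ρ : ℝ) (k : ℕ) :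
    HasDerivAt (fun ρ => ∑ n ∈ range (k + 1), poissonMass ρ n) (-poissonMass ρ k) ρ := by
  induction k with
  | zero => simpa using hasDerivAt_poissonMass_zero ρ
  | succ k ih =>
    simp only [sum_range_succ _ (k + 1)]
    exact (ih.add (hasDerivAt_poissonMass_succ ρ k)).congr_deriv (by ring)

lemma antitoneOn_sum_range_poissonMass (k : ℕ) :
    AntitoneOn (fun ρ => ∑ n ∈ range k, poissonMass ρ n) (Ici 0) := by
  cases k with
  | zero => simp [AntitoneOn]
  | succ k =>
    have hderiv := fun ρ => hasDerivAt_sum_range_poissonMass ρ k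
    refine antitoneOn_of_hasDerivWithinAt_nonpos (convex_Ici 0)
      (fun ρ _ => (hderiv ρ).continuousAt.continuousWithinAt)
      (fun ρ _ => (hderiv ρ).hasDerivWithinAt) fun ρ hρ => ?_
    rw [interior_Ici] at hρ
    exact neg_nonpos.mpr (poissonMass_nonneg (le_of_lt hρ) k)

lemma monotoneOn_tsum_abs_poissonMass_sub {ρ₀ : ℝ} (h₀ : 0 ≤ ρ₀) :
    MonotoneOn (fun ρ => ∑' n, |poissonMass ρ₀ n - poissonMass ρ n|) (Ici ρ₀) := by
  classical
  intro x hx y hy hxy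
  dsimp only
  by_cases hcross : ∃ k, poissonMass ρ₀ k ≤ poissonMass x k
  · let k := Nat.find hcross
    have hbefore : ∀ n ∈ range k, 0 ≤ poissonMass ρ₀ n - poissonMass x n := fun n hn =>
      sub_nonneg.mpr (not_le.mp (Nat.find_min hcross (mem_range.mp hn))).le
    have hafter : ∀ n ∉ range k, poissonMass ρ₀ n - poissonMass x n ≤ 0 := fun n hn =>
      sub_nonpos.mpr (poissonMass_le_of_le h₀ hx (Nat.find_spec hcross)
        (not_lt.mp (mt mem_range.mpr hn)))
    have hcdf : ∑ n ∈ range k, poissonMass y n ≤ ∑ n ∈ range k, poissonMass x n :=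
      antitoneOn_sum_range_poissonMass k (h₀.trans hx) (h₀.trans hy) hxy
    calc ∑' n, |poissonMass ρ₀ n - poissonMass x n|
        = 2 * ∑ n ∈ range k, (poissonMass ρ₀ n - poissonMass x n) :=
          tsum_abs_eq_two_mul_sum (hasSum_poissonMass_sub ρ₀ x) hbefore hafter
      _ ≤ 2 * ∑ n ∈ range k, (poissonMass ρ₀ n - poissonMass y n) := by
          simp only [sum_sub_distrib]; linarith
      _ ≤ ∑' n, |poissonMass ρ₀ n - poissonMass y n| :=
          two_mul_sum_le_tsum_abs (hasSum_poissonMass_sub ρ₀ y) _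
  · push Not at hcross
    have hzero : ∑' n, |poissonMass ρ₀ n - poissonMass x n| = 0 := by
      rw [tsum_congr fun n => abs_of_nonneg (sub_nonneg.mpr (hcross n).le)]
      exact (hasSum_poissonMass_sub ρ₀ x).tsum_eq
    rw [hzero]
    exact tsum_nonneg fun n => abs_nonneg _

/-- For fixed `ρ₀ > 0`, the total variation distance between `Poisson ρ₀` and `Poisson ρ₁`
is monotone increasing in `ρ₁` on `[ρ₀, ∞)`; equivalently, the MAP error probability
`P_e(ρ₀, ρ₁) = 1/2 − (1/4) Σ |p_{ρ₀}(n) − p_{ρ₁}(n)|` is decreasing in `ρ₁` on `[ρ₀, ∞)`. -/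
theorem poisson_tv_monotone (ρ₀ : ℝ) (h₀ : 0 < ρ₀) :
    MonotoneOn (fun ρ₁ : ℝ => (1/2) * ∑' n : ℕ,
        |Real.exp (-ρ₀) * ρ₀ ^ n / (n.factorial : ℝ)
          - Real.exp (-ρ₁) * ρ₁ ^ n / (n.factorial : ℝ)|) (Set.Ici ρ₀)
    ∧ AntitoneOn (fun ρ₁ : ℝ => 1/2 - (1/4) * ∑' n : ℕ,
        |Real.exp (-ρ₀) * ρ₀ ^ n / (n.factorial : ℝ)
          - Real.exp (-ρ₁) * ρ₁ ^ n / (n.factorial : ℝ)|) (Set.Ici ρ₀) := by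
  have hmono := monotoneOn_tsum_abs_poissonMass_sub h₀.le
  exact ⟨fun x hx y hy hxy => mul_le_mul_of_nonneg_left (hmono hx hy hxy) (by norm_num),
    fun x hx y hy hxy =>
      sub_le_sub_left (mul_le_mul_of_nonneg_left (hmono hx hy hxy) (by norm_num)) _⟩
end

section
/- Let T > 0, let μ be a finite nonzero Borel measure on the interval [0, T], and let f_1, f_2 : [0, T] → ℝ be continuous functions. Then there exist points t_1, t_2 ∈ [0, T] and nonnegative reals a_1, a_2 such that a_1 f_k(t_1) + a_2 f_k(t_2) = ∫_{[0,T]} f_k dμ for k = 1, 2, and a_1 + a_2 ≤ μ([0, T]). -/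
/-!
Write `v = (f₁, f₂)` and `K = v '' [0, T] ⊂ ℝ²`, a compact set. The `μ`-average of `v` lies in the
closure of the convex hull of `K`. A nonnegative combination of finitely many points of `ℝ²` can be
rewritten with at most two of them and no larger total weight: three or more points satisfy a
linear relation, which can be normalised to have nonnegative coefficient sum, and subtracting the
right multiple of it kills one weight. Hence the convex hull of `K` lies in the set of all
`a • p + b • q` with `p, q ∈ K`, `a, b ≥ 0`, `a + b ≤ 1`, which is compact and so contains the
closure too. Multiplying by `μ [0, T]` gives the two point masses.
-/

open MeasureTheory Finset Module

section ConicCaratheodory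

variable {𝕜 E : Type*} [Field 𝕜] [LinearOrder 𝕜] [IsStrictOrderedRing 𝕜]
  [AddCommGroup E] [Module 𝕜 E] [FiniteDimensional 𝕜 E]

theorem exists_relation_sum_nonneg_of_finrank_lt_card {s : Finset E}
    (h : finrank 𝕜 E < #s) :
    ∃ g : E → 𝕜, ∑ x ∈ s, g x • x = 0 ∧ 0 ≤ ∑ x ∈ s, g x ∧ ∃ y ∈ s, 0 < g y := by
  obtain ⟨f, hf, x₀, hx₀, hfx₀⟩ := Module.exists_nontrivial_relation_of_finrank_lt_card h
  -- Of `f` and `-f`, take the one with nonnegative total weight; it cannot be `≤ 0` everywhere.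
  obtain ⟨g, hg, hgsum, hgx₀⟩ : ∃ g : E → 𝕜,
      ∑ x ∈ s, g x • x = 0 ∧ 0 ≤ ∑ x ∈ s, g x ∧ g x₀ ≠ 0 := by
    rcases le_total 0 (∑ x ∈ s, f x) with hsum | hsum
    · exact ⟨f, hf, hsum, hfx₀⟩
    · refine ⟨-f, ?_, ?_, neg_ne_zero.mpr hfx₀⟩
      · simp only [Pi.neg_apply, neg_smul, sum_neg_distrib, hf, neg_zero]
      · simpa only [Pi.neg_apply, sum_neg_distrib, neg_nonneg] using hsum
  refine ⟨g, hg, hgsum, ?_⟩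
  by_contra! hnonpos
  exact hgx₀ <| (sum_eq_zero_iff_of_nonpos hnonpos).mp
    (le_antisymm (sum_nonpos hnonpos) hgsum) x₀ hx₀

theorem exists_erase_sum_smul_eq_of_finrank_lt_card [DecidableEq E] {s : Finset E}
    (h : finrank 𝕜 E < #s) {w : E → 𝕜} (hw : ∀ x ∈ s, 0 ≤ w x) :
    ∃ y ∈ s, ∃ w' : E → 𝕜, (∀ x ∈ s.erase y, 0 ≤ w' x) ∧
      ∑ x ∈ s.erase y, w' x ≤ ∑ x ∈ s, w x ∧
      ∑ x ∈ s.erase y, w' x • x = ∑ x ∈ s, w x • x := by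
  obtain ⟨g, hg, hgsum, x₁, hx₁, hgx₁⟩ := exists_relation_sum_nonneg_of_finrank_lt_card h
  -- Subtract the largest multiple `c • g` of the relation that keeps all weights nonnegative.
  obtain ⟨y, hy, hmin⟩ := exists_min_image {x ∈ s | 0 < g x} (fun x => w x / g x)
    ⟨x₁, mem_filter.mpr ⟨hx₁, hgx₁⟩⟩
  rw [mem_filter] at hy
  set c := w y / g y
  have hc : 0 ≤ c := div_nonneg (hw y hy.1) hy.2.le
  have hy0 : w y - c * g y = 0 := by simp only [c, div_mul_cancel₀ _ hy.2.ne', sub_self]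
  refine ⟨y, hy.1, fun x => w x - c * g x, fun x hx => ?_, ?_, ?_⟩
  · have hxs := mem_of_mem_erase hx
    rcases le_or_gt (g x) 0 with hgx | hgx
    · nlinarith [hw x hxs]
    · have := hmin x (mem_filter.mpr ⟨hxs, hgx⟩)
      rw [le_div_iff₀ hgx] at this
      linarith
  · rw [sum_erase (f := fun x => w x - c * g x) s hy0, sum_sub_distrib, ← mul_sum]
    linarith [mul_nonneg hc hgsum]
  · rw [sum_erase (f := fun x => (w x - c * g x) • x) s (by rw [hy0, zero_smul])]
    simp only [sub_smul, sum_sub_distrib, mul_smul, ← smul_sum, hg, smul_zero, sub_zero]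

/-- Carathéodory's theorem for cones, with control of the total weight. -/
theorem exists_subset_card_le_finrank_sum_smul_eq (s : Finset E) {w : E → 𝕜}
    (hw : ∀ x ∈ s, 0 ≤ w x) :
    ∃ t ⊆ s, #t ≤ finrank 𝕜 E ∧ ∃ w' : E → 𝕜, (∀ x ∈ t, 0 ≤ w' x) ∧
      ∑ x ∈ t, w' x ≤ ∑ x ∈ s, w x ∧ ∑ x ∈ t, w' x • x = ∑ x ∈ s, w x • x := by
  classical
  induction s using Finset.strongInduction generalizing w with | H s ih
  by_cases hs : #s ≤ finrank 𝕜 E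
  · exact ⟨s, subset_rfl, hs, w, hw, le_rfl, rfl⟩
  obtain ⟨y, hy, w', hw', hle, heq⟩ :=
    exists_erase_sum_smul_eq_of_finrank_lt_card (not_le.mp hs) hw
  obtain ⟨t, hts, ht, w'', hw'', hle', heq'⟩ := ih _ (erase_ssubset hy) hw'
  exact ⟨t, hts.trans (erase_subset _ _), ht, w'', hw'', hle'.trans hle, heq'.trans heq⟩

end ConicCaratheodory

section TwoPointSubhull

variable {E : Type*} [AddCommGroup E] [Module ℝ E]

def twoPointSubhull (K : Set E) : Set E :=
  {x | ∃ p ∈ K, ∃ q ∈ K, ∃ a b : ℝ, 0 ≤ a ∧ 0 ≤ b ∧ a + b ≤ 1 ∧ a • p + b • q = x}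

theorem sum_smul_mem_twoPointSubhull {K : Set E} (hK : K.Nonempty) {t : Finset E}
    (ht : #t ≤ 2) (htK : ↑t ⊆ K) {w : E → ℝ} (hw : ∀ x ∈ t, 0 ≤ w x)
    (hsum : ∑ x ∈ t, w x ≤ 1) : ∑ x ∈ t, w x • x ∈ twoPointSubhull K := by
  classical
  interval_cases h : #t
  · obtain ⟨p, hp⟩ := hK
    rw [card_eq_zero.mp h, sum_empty]
    exact ⟨p, hp, p, hp, 0, 0, le_rfl, le_rfl, by norm_num, by simp⟩
  · obtain ⟨p, rfl⟩ := card_eq_one.mp h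
    have hp : p ∈ K := htK (mem_singleton_self p)
    simp only [sum_singleton, mem_singleton, forall_eq] at hsum hw ⊢
    exact ⟨p, hp, p, hp, w p, 0, hw, le_rfl, by simpa using hsum, by simp⟩
  · obtain ⟨p, q, hpq, rfl⟩ := card_eq_two.mp h
    simp only [coe_pair, Set.insert_subset_iff, Set.singleton_subset_iff] at htK
    rw [sum_pair hpq] at hsum ⊢
    exact ⟨p, htK.1, q, htK.2, w p, w q, hw p (by simp), hw q (by simp), hsum, rfl⟩

theorem convexHull_subset_twoPointSubhull (hE : finrank ℝ E ≤ 2) [FiniteDimensional ℝ E]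
    (K : Set E) : convexHull ℝ K ⊆ twoPointSubhull K := by
  intro x hx
  have hK : K.Nonempty := convexHull_nonempty_iff.mp ⟨x, hx⟩
  rw [convexHull_eq_union_convexHull_finite_subsets, Set.mem_iUnion₂] at hx
  obtain ⟨s, hsK, hx⟩ := hx
  obtain ⟨w, hw, hw1, rfl⟩ := Finset.mem_convexHull'.mp hx
  obtain ⟨t, hts, ht, w', hw', hle, heq⟩ := exists_subset_card_le_finrank_sum_smul_eq s hw
  rw [← heq]
  exact sum_smul_mem_twoPointSubhull hK (ht.trans hE) ((coe_subset.mpr hts).trans hsK) hw'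
    (hle.trans hw1.le)

variable [TopologicalSpace E] [IsTopologicalAddGroup E] [ContinuousSMul ℝ E]

theorem isCompact_twoPointSubhull {K : Set E} (hK : IsCompact K) :
    IsCompact (twoPointSubhull K) := by
  set Δ : Set (ℝ × ℝ) := {c | 0 ≤ c.1 ∧ 0 ≤ c.2 ∧ c.1 + c.2 ≤ 1}
  have hΔ : IsCompact Δ := by
    refine (isCompact_Icc (a := ((0 : ℝ), (0 : ℝ))) (b := (1, 1))).of_isClosed_subset
      (isClosed_le continuous_const continuous_fst |>.inter <|
        isClosed_le continuous_const continuous_snd |>.inter <|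
        isClosed_le (continuous_fst.add continuous_snd) continuous_const) ?_
    rintro ⟨a, b⟩ ⟨ha, hb, hab⟩
    exact ⟨⟨ha, hb⟩, ⟨by dsimp only at *; linarith, by dsimp only at *; linarith⟩⟩
  have : twoPointSubhull K =
      (fun z : (ℝ × ℝ) × E × E => z.1.1 • z.2.1 + z.1.2 • z.2.2) '' (Δ ×ˢ K ×ˢ K) := by
    ext x
    simp only [twoPointSubhull, Set.mem_ofPred_eq, Set.mem_image, Set.mem_prod,
      Prod.exists, Δ]
    grind
  rw [this]
  exact (hΔ.prod (hK.prod hK)).image (by fun_prop)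

end TwoPointSubhull

theorem setAverage_mem_twoPointSubhull {X E : Type*} [MeasurableSpace X] [NormedAddCommGroup E]
    [NormedSpace ℝ E] [FiniteDimensional ℝ E] (hE : finrank ℝ E ≤ 2) {μ : Measure X} {s : Set X}
    (h0 : μ s ≠ 0) (hs : μ s ≠ ⊤) {v : X → E} (hv : IntegrableOn v s μ) {K : Set E}
    (hK : IsCompact K) (hvK : ∀ᵐ x ∂μ.restrict s, v x ∈ K) :
    ⨍ x in s, v x ∂μ ∈ twoPointSubhull K :=
  closure_minimal (convexHull_subset_twoPointSubhull hE K)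
    (isCompact_twoPointSubhull hK).isClosed <|
    (convex_convexHull ℝ K).set_average_mem_closure h0 hs
      (hvK.mono fun _ hx => subset_convexHull ℝ K hx) hv

theorem support_lemma_two_points_general (T : ℝ)
    (μ : Measure ℝ) [IsFiniteMeasure μ] (hμ : μ ≠ 0)
    (hsupp : μ (Set.Icc 0 T)ᶜ = 0)
    (f₁ f₂ : ℝ → ℝ)
    (hf₁ : ContinuousOn f₁ (Set.Icc 0 T)) (hf₂ : ContinuousOn f₂ (Set.Icc 0 T)) :
    ∃ t₁ t₂ a₁ a₂ : ℝ,
      t₁ ∈ Set.Icc 0 T ∧ t₂ ∈ Set.Icc 0 T ∧ 0 ≤ a₁ ∧ 0 ≤ a₂ ∧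
      a₁ * f₁ t₁ + a₂ * f₁ t₂ = ∫ x in Set.Icc 0 T, f₁ x ∂μ ∧
      a₁ * f₂ t₁ + a₂ * f₂ t₂ = ∫ x in Set.Icc 0 T, f₂ x ∂μ ∧
      a₁ + a₂ ≤ (μ (Set.Icc 0 T)).toReal := by
  set I := Set.Icc 0 T
  have hμI : μ I ≠ 0 := fun h => hμ <| Measure.measure_univ_eq_zero.mp <|
    nonpos_iff_eq_zero.mp <| (measure_univ_le_add_compl I).trans_eq (by rw [h, hsupp, add_zero])
  have hv : ContinuousOn (fun t => (f₁ t, f₂ t)) I := hf₁.prodMk hf₂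
  obtain ⟨p, ⟨t₁, ht₁, rfl⟩, q, ⟨t₂, ht₂, rfl⟩, a, b, ha, hb, hab, hx⟩ :=
    setAverage_mem_twoPointSubhull (by simp) hμI (measure_ne_top μ I)
      (hv.integrableOn_compact isCompact_Icc) (isCompact_Icc.image_of_continuousOn hv)
      (ae_restrict_of_forall_mem measurableSet_Icc fun t ht => Set.mem_image_of_mem _ ht)
  set m := (μ I).toReal
  have hm : 0 < m := ENNReal.toReal_pos hμI (measure_ne_top μ I)
  have hint : (m * a) • (f₁ t₁, f₂ t₁) + (m * b) • (f₁ t₂, f₂ t₂) =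
      (∫ x in I, f₁ x ∂μ, ∫ x in I, f₂ x ∂μ) := by
    rw [← integral_pair (hf₁.integrableOn_compact isCompact_Icc)
      (hf₂.integrableOn_compact isCompact_Icc), mul_smul, mul_smul, ← smul_add, hx,
      setAverage_eq, measureReal_def, smul_inv_smul₀ hm.ne']
  simp only [Prod.smul_mk, Prod.mk_add_mk, smul_eq_mul, Prod.mk.injEq] at hint
  refine ⟨t₁, t₂, m * a, m * b, ht₁, ht₂, by positivity, by positivity, hint.1, hint.2, ?_⟩
  rw [← mul_add]
  exact mul_le_of_le_one_right hm.le hab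

/-- Two-point support lemma: any finite nonzero Borel measure `μ` supported on `[0, T]`
can be replaced by (at most) two point masses in `[0, T]` that preserve the integrals of
two prescribed continuous functions `f₁, f₂` while not increasing the total mass. -/
theorem support_lemma_two_points (T : ℝ) (hT : 0 < T)
    (μ : Measure ℝ) [IsFiniteMeasure μ] (hμ : μ ≠ 0)
    (hsupp : μ (Set.Icc 0 T)ᶜ = 0)
    (f₁ f₂ : ℝ → ℝ)
    (hf₁ : ContinuousOn f₁ (Set.Icc 0 T)) (hf₂ : ContinuousOn f₂ (Set.Icc 0 T)) :
    ∃ t₁ t₂ a₁ a₂ : ℝ,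
      t₁ ∈ Set.Icc 0 T ∧ t₂ ∈ Set.Icc 0 T ∧ 0 ≤ a₁ ∧ 0 ≤ a₂ ∧
      a₁ * f₁ t₁ + a₂ * f₁ t₂ = ∫ x in Set.Icc 0 T, f₁ x ∂μ ∧
      a₁ * f₂ t₁ + a₂ * f₂ t₂ = ∫ x in Set.Icc 0 T, f₂ x ∂μ ∧
      a₁ + a₂ ≤ (μ (Set.Icc 0 T)).toReal :=
  support_lemma_two_points_general T μ hμ hsupp f₁ f₂ hf₁ hf₂
end

section
/- Define the sequence (α_i) of reals by α_0 = 1 and α_i = (1/(2i+1)) Σ_{j=0}^{i−1} α_j α_{i−1−j} for i ≥ 1. Then for every i ≥ 0, (1/3)^i ≤ α_i ≤ (1/2)^i. -/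
/-!
Compare `α` with the geometric sequences `s ^ i` and `r ^ i`. The recursion maps a geometric
sequence `r ^ i` to `w * ∑_{j ≤ n} r ^ j r ^ (n - j) = (n + 1) w r ^ n`, so whenever the normalised
weight `(n + 1) w` stays in `[s, r]`, strong induction keeps `α` sandwiched between the two.
For the weight `1 / (2i + 1)` one has `i / (2i + 1) ∈ [1/3, 1/2]`.
-/

open Finset

theorem sum_range_succ_pow_mul_pow_sub {R : Type*} [Semiring R] (r : R) (n : ℕ) :
    ∑ j ∈ range (n + 1), r ^ j * r ^ (n - j) = (n + 1) * r ^ n := by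
  rw [sum_congr rfl fun j hj => pow_mul_pow_sub r (Nat.lt_succ_iff.mp (mem_range.mp hj)),
    sum_const, card_range, nsmul_eq_mul, Nat.cast_succ]

section Sandwich

variable {R : Type*} [CommSemiring R] [LinearOrder R] [IsStrictOrderedRing R]

theorem sum_range_succ_mul_sub_le_of_le {a b : ℕ → R} {n : ℕ} (ha : ∀ k ≤ n, 0 ≤ a k)
    (hab : ∀ k ≤ n, a k ≤ b k) :
    ∑ j ∈ range (n + 1), a j * a (n - j) ≤ ∑ j ∈ range (n + 1), b j * b (n - j) :=
  sum_le_sum fun j hj => by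
    have hj : j ≤ n := Nat.lt_succ_iff.mp (mem_range.mp hj)
    exact mul_le_mul (hab j hj) (hab _ (n.sub_le j)) (ha _ (n.sub_le j))
      ((ha j hj).trans (hab j hj))

theorem pow_le_and_le_pow_of_eq_mul_sum_range {α w : ℕ → R} {s r : R} (hs : 0 ≤ s)
    (hsw : ∀ n : ℕ, s ≤ (n + 1) * w n) (hwr : ∀ n : ℕ, (n + 1) * w n ≤ r) (h0 : α 0 = 1)
    (hrec : ∀ n, α (n + 1) = w n * ∑ j ∈ range (n + 1), α j * α (n - j)) (i : ℕ) :
    s ^ i ≤ α i ∧ α i ≤ r ^ i := by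
  induction i using Nat.strong_induction_on with
  | _ i ih =>
    cases i with
    | zero => simp [h0]
    | succ n =>
      have ih' : ∀ k ≤ n, s ^ k ≤ α k ∧ α k ≤ r ^ k := fun k hk => ih k (Nat.lt_succ_of_le hk)
      have hw : 0 ≤ w n := nonneg_of_mul_nonneg_right (hs.trans (hsw n)) (by positivity)
      have hr : 0 ≤ r := hs.trans ((hsw n).trans (hwr n))
      have hα : ∀ k ≤ n, 0 ≤ α k := fun k hk => (pow_nonneg hs k).trans (ih' k hk).1
      constructor
      · calc s ^ (n + 1) = s * s ^ n := pow_succ' s n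
          _ ≤ (n + 1) * w n * s ^ n := by gcongr; exact hsw n
          _ = w n * ∑ j ∈ range (n + 1), s ^ j * s ^ (n - j) := by
            rw [sum_range_succ_pow_mul_pow_sub]; ring
          _ ≤ α (n + 1) := by
            rw [hrec]
            exact mul_le_mul_of_nonneg_left (sum_range_succ_mul_sub_le_of_le
              (fun k _ => pow_nonneg hs k) fun k hk => (ih' k hk).1) hw
      · calc α (n + 1) ≤ w n * ∑ j ∈ range (n + 1), r ^ j * r ^ (n - j) := by
              rw [hrec]
              exact mul_le_mul_of_nonneg_left
                (sum_range_succ_mul_sub_le_of_le hα fun k hk => (ih' k hk).2) hw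
          _ = (n + 1) * w n * r ^ n := by rw [sum_range_succ_pow_mul_pow_sub]; ring
          _ ≤ r * r ^ n := by gcongr; exact hwr n
          _ = r ^ (n + 1) := (pow_succ' r n).symm

end Sandwich

/-- Bounds on the coefficients of the perturbation series: if `α 0 = 1` and
`α i = (1/(2i+1)) Σ_{j<i} α j · α (i−1−j)` for `i ≥ 1`, then `(1/3)^i ≤ α i ≤ (1/2)^i`. -/
theorem alpha_bounds (α : ℕ → ℝ) (h0 : α 0 = 1)
    (hrec : ∀ i : ℕ, 1 ≤ i →
      α i = (1 / (2 * (i : ℝ) + 1)) * ∑ j ∈ Finset.range i, α j * α (i - 1 - j)) :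
    ∀ i : ℕ, (1/3 : ℝ) ^ i ≤ α i ∧ α i ≤ (1/2 : ℝ) ^ i := by
  have hrec' : ∀ n : ℕ, α (n + 1) =
      1 / (2 * ((n : ℝ) + 1) + 1) * ∑ j ∈ range (n + 1), α j * α (n - j) := fun n => by
    simpa using hrec (n + 1) n.succ_pos
  refine pow_le_and_le_pow_of_eq_mul_sum_range (by norm_num) (fun n => ?_) (fun n => ?_) h0 hrec'
  · rw [mul_one_div, le_div_iff₀ (by positivity)]
    linarith [(n.cast_nonneg : (0 : ℝ) ≤ n)]
  · rw [mul_one_div, div_le_iff₀ (by positivity)]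
    linarith
end

section
/- Define the sequence (α_i) of reals by α_0 = 1 and α_i = (1/(2i+1)) Σ_{j=0}^{i−1} α_j α_{i−1−j} for i ≥ 1. Then for all reals λ ≥ 0 and t ≥ 0 with λ t² < 2, the series Σ_{i=0}^{∞} λ^i α_i t^{2i+1} converges absolutely. -/
/-! Induction on the recursion gives `0 ≤ α i ≤ 2⁻ⁱ`: each of the `i` products in the sum is at
most `2^{-(i-1)}`, and `i / (2i + 1) ≤ 1/2`. Hence `|λ^i α_i t^{2i+1}| ≤ |t| (λ t² / 2)^i`, a
convergent geometric series. -/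

open Finset

section Recursion

variable {α : ℕ → ℝ} (h0 : α 0 = 1)
  (hrec : ∀ i : ℕ, 1 ≤ i →
    α i = (1 / (2 * (i : ℝ) + 1)) * ∑ j ∈ range i, α j * α (i - 1 - j))
include h0 hrec

theorem nonneg_of_convolution_recursion (i : ℕ) : 0 ≤ α i := by
  induction i using Nat.strong_induction_on with
  | _ i ih =>
    rcases Nat.eq_zero_or_pos i with rfl | hi
    · simp [h0]
    · rw [hrec i hi]
      have hsum : 0 ≤ ∑ j ∈ range i, α j * α (i - 1 - j) :=
        sum_nonneg fun j hj => mul_nonneg (ih j (mem_range.mp hj)) (ih _ (by omega))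
      positivity

theorem le_half_pow_of_convolution_recursion (i : ℕ) : α i ≤ (1 / 2 : ℝ) ^ i := by
  induction i using Nat.strong_induction_on with
  | _ i ih =>
    rcases Nat.eq_zero_or_pos i with rfl | hi
    · simp [h0]
    have hterm : ∀ j ∈ range i, α j * α (i - 1 - j) ≤ (1 / 2 : ℝ) ^ (i - 1) := by
      intro j hj
      have hj := mem_range.mp hj
      calc α j * α (i - 1 - j) ≤ (1 / 2 : ℝ) ^ j * (1 / 2 : ℝ) ^ (i - 1 - j) :=
            mul_le_mul (ih j hj) (ih _ (by omega))
              (nonneg_of_convolution_recursion h0 hrec _) (by positivity)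
        _ = (1 / 2 : ℝ) ^ (i - 1) := by rw [← pow_add]; congr 1; omega
    have hsum : ∑ j ∈ range i, α j * α (i - 1 - j) ≤ i * (1 / 2 : ℝ) ^ (i - 1) := by
      simpa using sum_le_sum hterm
    have hratio : (i : ℝ) / (2 * i + 1) ≤ 1 / 2 := by
      rw [div_le_div_iff₀ (by positivity) two_pos]; linarith
    calc α i ≤ 1 / (2 * (i : ℝ) + 1) * (i * (1 / 2 : ℝ) ^ (i - 1)) := by
          rw [hrec i hi]; gcongr
      _ = (i : ℝ) / (2 * i + 1) * (1 / 2 : ℝ) ^ (i - 1) := by ring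
      _ ≤ 1 / 2 * (1 / 2 : ℝ) ^ (i - 1) := by gcongr
      _ = (1 / 2 : ℝ) ^ i := by rw [← pow_succ']; congr 1; omega

end Recursion

theorem abs_pow_mul_mul_pow_le_geometric {lam a t : ℝ} (i : ℕ) (hlam : 0 ≤ lam) (ha : 0 ≤ a)
    (ha' : a ≤ (1 / 2 : ℝ) ^ i) :
    |lam ^ i * a * t ^ (2 * i + 1)| ≤ |t| * (lam * t ^ 2 / 2) ^ i := by
  have hsplit : |lam ^ i * a * t ^ (2 * i + 1)| = a * (|t| * (lam * t ^ 2) ^ i) := by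
    rw [abs_mul, abs_mul, abs_of_nonneg (pow_nonneg hlam i), abs_of_nonneg ha, abs_pow,
      pow_succ, pow_mul, mul_pow, sq_abs]
    ring
  calc |lam ^ i * a * t ^ (2 * i + 1)| ≤ (1 / 2 : ℝ) ^ i * (|t| * (lam * t ^ 2) ^ i) := by
        rw [hsplit]; gcongr
    _ = |t| * (lam * t ^ 2 / 2) ^ i := by rw [div_eq_mul_one_div _ 2, mul_pow]; ring

theorem perturbation_series_summable_general (α : ℕ → ℝ) (h0 : α 0 = 1)
    (hrec : ∀ i : ℕ, 1 ≤ i →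
      α i = (1 / (2 * (i : ℝ) + 1)) * ∑ j ∈ Finset.range i, α j * α (i - 1 - j))
    (lam t : ℝ) (hlam : 0 ≤ lam) (hconv : lam * t ^ 2 < 2) :
    Summable (fun i : ℕ => |lam ^ i * α i * t ^ (2 * i + 1)|) := by
  have hratio : lam * t ^ 2 / 2 < 1 := by linarith
  have hgeom := (summable_geometric_of_lt_one (by positivity) hratio).mul_left |t|
  refine hgeom.of_nonneg_of_le (fun i => abs_nonneg _) fun i => ?_
  exact abs_pow_mul_mul_pow_le_geometric i hlam (nonneg_of_convolution_recursion h0 hrec i)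
    (le_half_pow_of_convolution_recursion h0 hrec i)

/-- Absolute convergence of the perturbation series `Σ λ^i α_i t^{2i+1}` whenever
`λ ≥ 0`, `t ≥ 0` and `λ t² < 2`. -/
theorem perturbation_series_summable (α : ℕ → ℝ) (h0 : α 0 = 1)
    (hrec : ∀ i : ℕ, 1 ≤ i →
      α i = (1 / (2 * (i : ℝ) + 1)) * ∑ j ∈ Finset.range i, α j * α (i - 1 - j))
    (lam t : ℝ) (hlam : 0 ≤ lam) (ht : 0 ≤ t) (hconv : lam * t ^ 2 < 2) :
    Summable (fun i : ℕ => |lam ^ i * α i * t ^ (2 * i + 1)|) :=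
  perturbation_series_summable_general α h0 hrec lam t hlam hconv
end

section
/- Define the sequence (α_i) of reals by α_0 = 1 and α_i = (1/(2i+1)) Σ_{j=0}^{i−1} α_j α_{i−1−j} for i ≥ 1. Fix λ ≥ 0 and T₀ > 0 with λ T₀² < 2, and define u : [0, T₀] → ℝ by u(t) = Σ_{i=0}^{∞} (−λ)^i α_i t^{2i+1}. Then for every t ∈ [0, T₀], u(t) = t − λ ∫_0^t u(s)² ds. -/
/-!
The recursion says `(2n+3) α_{n+1} = Σ_{j ≤ n} α_j α_{n-j}`; inductively `0 ≤ α_i ≤ 2⁻ⁱ`,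
so for `λ t² < 2` the odd power series `u` converges absolutely and may be differentiated
termwise. The same recursion identifies the Cauchy square of `u` with the shifted derivative
series, which gives the Riccati equation `u' = 1 - λ u²`; as `u 0 = 0`, integrating it over
`[0, t]` yields the integral equation.
-/

open Finset Set

section Coefficients

variable {α : ℕ → ℝ}

lemma sum_range_mul_eq_of_rec
    (hrec : ∀ i : ℕ, 1 ≤ i →
      α i = (1 / (2 * (i : ℝ) + 1)) * ∑ j ∈ Finset.range i, α j * α (i - 1 - j))
    (n : ℕ) : ∑ j ∈ range (n + 1), α j * α (n - j) = (2 * n + 3) * α (n + 1) := by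
  rw [hrec (n + 1) (by omega), Nat.add_sub_cancel]
  push_cast
  field_simp
  ring

lemma alpha_nonneg (h0 : α 0 = 1)
    (hα : ∀ n : ℕ, ∑ j ∈ range (n + 1), α j * α (n - j) = (2 * n + 3) * α (n + 1))
    (i : ℕ) : 0 ≤ α i := by
  induction i using Nat.strong_induction_on with
  | _ i ih =>
    rcases i with _ | n
    · simp [h0]
    · have hn := hα n
      have hsum : 0 ≤ ∑ j ∈ range (n + 1), α j * α (n - j) :=
        sum_nonneg fun j hj => mul_nonneg (ih j (by simp at hj; omega)) (ih _ (by omega))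
      nlinarith

lemma alpha_le_half_pow (h0 : α 0 = 1)
    (hα : ∀ n : ℕ, ∑ j ∈ range (n + 1), α j * α (n - j) = (2 * n + 3) * α (n + 1))
    (i : ℕ) : α i ≤ (1 / 2) ^ i := by
  induction i using Nat.strong_induction_on with
  | _ i ih =>
    rcases i with _ | n
    · simp [h0]
    · have hsum : ∑ j ∈ range (n + 1), α j * α (n - j) ≤ (n + 1) * (1 / 2) ^ n := by
        calc ∑ j ∈ range (n + 1), α j * α (n - j)
            ≤ ∑ j ∈ range (n + 1), (1 / 2 : ℝ) ^ j * (1 / 2) ^ (n - j) := by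
              refine sum_le_sum fun j hj => ?_
              have hj : j ≤ n := Nat.lt_succ_iff.mp (mem_range.mp hj)
              exact mul_le_mul (ih j (by omega)) (ih _ (by omega))
                (alpha_nonneg h0 hα _) (by positivity)
          _ = (n + 1) * (1 / 2) ^ n := by
              rw [sum_congr rfl fun j hj => by
                rw [← pow_add, Nat.add_sub_cancel' (Nat.lt_succ_iff.mp (mem_range.mp hj))]]
              simp
      have hn := hα n
      rw [pow_succ]
      nlinarith [pow_pos (by norm_num : (0 : ℝ) < 1 / 2) n]

end Coefficients

section OddPowerSeries

variable {c : ℕ → ℝ} {K r t : ℝ}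

lemma abs_mul_pow_two_mul_le (hc : ∀ i, |c i| ≤ K ^ i) (ht : |t| ≤ r) (i : ℕ) :
    |c i| * |t| ^ (2 * i) ≤ (K * r ^ 2) ^ i :=
  calc |c i| * |t| ^ (2 * i) ≤ K ^ i * r ^ (2 * i) :=
        mul_le_mul (hc i) (pow_le_pow_left₀ (abs_nonneg t) ht _) (by positivity)
          ((abs_nonneg _).trans (hc i))
    _ = (K * r ^ 2) ^ i := by rw [mul_pow, pow_mul]

lemma summable_two_mul_add_one_mul_geometric {q : ℝ} (hq₀ : 0 ≤ q) (hq₁ : q < 1) :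
    Summable fun i : ℕ => (2 * (i : ℝ) + 1) * q ^ i := by
  have hi := summable_pow_mul_geometric_of_norm_lt_one (R := ℝ) 1
    (by rwa [Real.norm_of_nonneg hq₀])
  simp only [pow_one] at hi
  simpa [add_mul, mul_assoc] using (hi.mul_left 2).add (summable_geometric_of_lt_one hq₀ hq₁)

lemma summable_norm_mul_pow_odd (hK : 0 ≤ K) (hc : ∀ i, |c i| ≤ K ^ i) (hKr : K * r ^ 2 < 1)
    (ht : |t| ≤ r) : Summable fun i => ‖c i * t ^ (2 * i + 1)‖ := by
  refine ((summable_geometric_of_lt_one (by positivity) hKr).mul_left r).of_nonneg_of_le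
    (fun i => norm_nonneg _) fun i => ?_
  calc ‖c i * t ^ (2 * i + 1)‖ = |t| * (|c i| * |t| ^ (2 * i)) := by
        rw [norm_mul, norm_pow, Real.norm_eq_abs, Real.norm_eq_abs, pow_succ]; ring
    _ ≤ r * (K * r ^ 2) ^ i :=
        mul_le_mul ht (abs_mul_pow_two_mul_le hc ht i) (by positivity)
          ((abs_nonneg t).trans ht)

lemma norm_mul_deriv_pow_odd_le (hc : ∀ i, |c i| ≤ K ^ i) (ht : |t| ≤ r) (i : ℕ) :
    ‖c i * ((2 * i + 1) * t ^ (2 * i))‖ ≤ (2 * i + 1) * (K * r ^ 2) ^ i := by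
  calc ‖c i * ((2 * i + 1) * t ^ (2 * i))‖ = (2 * i + 1) * (|c i| * |t| ^ (2 * i)) := by
        rw [norm_mul, norm_mul, norm_pow, Real.norm_eq_abs, Real.norm_eq_abs, Real.norm_eq_abs,
          abs_of_pos (by positivity : (0 : ℝ) < 2 * i + 1)]; ring
    _ ≤ (2 * i + 1) * (K * r ^ 2) ^ i := by gcongr; exact abs_mul_pow_two_mul_le hc ht i

lemma summable_mul_deriv_pow_odd (hK : 0 ≤ K) (hc : ∀ i, |c i| ≤ K ^ i) (hKr : K * r ^ 2 < 1)
    (ht : |t| ≤ r) : Summable fun i => c i * ((2 * i + 1) * t ^ (2 * i)) :=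
  Summable.of_norm <| (summable_two_mul_add_one_mul_geometric (by positivity) hKr).of_nonneg_of_le
    (fun i => norm_nonneg _) (norm_mul_deriv_pow_odd_le hc ht)

lemma hasDerivAt_tsum_mul_pow_odd (hK : 0 ≤ K) (hc : ∀ i, |c i| ≤ K ^ i) (hKr : K * r ^ 2 < 1)
    (ht : |t| < r) :
    HasDerivAt (fun t => ∑' i, c i * t ^ (2 * i + 1))
      (∑' i, c i * ((2 * i + 1) * t ^ (2 * i))) t := by
  have hmem : ∀ y ∈ Ioo (-r) r, |y| ≤ r := fun y hy => abs_le.mpr ⟨hy.1.le, hy.2.le⟩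
  refine hasDerivAt_tsum_of_isPreconnected
    (summable_two_mul_add_one_mul_geometric (by positivity) hKr) isOpen_Ioo isPreconnected_Ioo
    (fun i y _ => ?_) (fun i y hy => norm_mul_deriv_pow_odd_le hc (hmem y hy) i)
    (y₀ := 0) (by simpa using (abs_nonneg t).trans_lt ht)
    (summable_norm_mul_pow_odd hK hc hKr (by simpa using (abs_nonneg t).trans ht.le)).of_norm
    (abs_lt.mp ht)
  simpa [mul_comm] using ((hasDerivAt_pow (2 * i + 1) y).const_mul (c i))

end OddPowerSeries

section PerturbationSeries

variable {α : ℕ → ℝ} {lam t : ℝ}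

lemma abs_neg_pow_mul_alpha_le (h0 : α 0 = 1)
    (hα : ∀ n : ℕ, ∑ j ∈ range (n + 1), α j * α (n - j) = (2 * n + 3) * α (n + 1))
    (hlam : 0 ≤ lam) (i : ℕ) : |(-lam) ^ i * α i| ≤ (lam / 2) ^ i := by
  rw [abs_mul, abs_pow, abs_neg, abs_of_nonneg hlam, abs_of_nonneg (alpha_nonneg h0 hα i),
    div_eq_mul_one_div lam 2, mul_pow]
  exact mul_le_mul_of_nonneg_left (alpha_le_half_pow h0 hα i) (by positivity)

lemma sq_tsum_neg_pow_mul_alpha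
    (hα : ∀ n : ℕ, ∑ j ∈ range (n + 1), α j * α (n - j) = (2 * n + 3) * α (n + 1))
    (hsum : Summable fun i => ‖(-lam) ^ i * α i * t ^ (2 * i + 1)‖) :
    (∑' i, (-lam) ^ i * α i * t ^ (2 * i + 1)) ^ 2
      = ∑' n : ℕ, (2 * n + 3) * ((-lam) ^ n * α (n + 1)) * t ^ (2 * n + 2) := by
  rw [sq, tsum_mul_tsum_eq_tsum_sum_range_of_summable_norm hsum hsum]
  refine tsum_congr fun n => ?_
  calc ∑ k ∈ range (n + 1), (-lam) ^ k * α k * t ^ (2 * k + 1) *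
        ((-lam) ^ (n - k) * α (n - k) * t ^ (2 * (n - k) + 1))
      = ∑ k ∈ range (n + 1), (-lam) ^ n * t ^ (2 * n + 2) * (α k * α (n - k)) := by
        refine sum_congr rfl fun k hk => ?_
        have hk : k ≤ n := Nat.lt_succ_iff.mp (mem_range.mp hk)
        rw [show (-lam) ^ n = (-lam) ^ k * (-lam) ^ (n - k) by
            rw [← pow_add, Nat.add_sub_cancel' hk],
          show t ^ (2 * n + 2) = t ^ (2 * k + 1) * t ^ (2 * (n - k) + 1) by
            rw [← pow_add]; congr 1; omega]
        ring
    _ = (2 * n + 3) * ((-lam) ^ n * α (n + 1)) * t ^ (2 * n + 2) := by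
        rw [← mul_sum, hα]; ring

lemma tsum_deriv_neg_pow_mul_alpha (h0 : α 0 = 1)
    (hα : ∀ n : ℕ, ∑ j ∈ range (n + 1), α j * α (n - j) = (2 * n + 3) * α (n + 1))
    (hsum : Summable fun i => ‖(-lam) ^ i * α i * t ^ (2 * i + 1)‖)
    (hdsum : Summable fun i => (-lam) ^ i * α i * ((2 * i + 1) * t ^ (2 * i))) :
    ∑' i, (-lam) ^ i * α i * ((2 * i + 1) * t ^ (2 * i))
      = 1 - lam * (∑' i, (-lam) ^ i * α i * t ^ (2 * i + 1)) ^ 2 := by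
  rw [hdsum.tsum_eq_zero_add, sq_tsum_neg_pow_mul_alpha hα hsum, ← tsum_mul_left,
    sub_eq_add_neg, ← tsum_neg]
  congr 1
  · simp [h0]
  · refine tsum_congr fun n => ?_
    push_cast
    ring

lemma hasDerivAt_tsum_neg_pow_mul_alpha (h0 : α 0 = 1)
    (hα : ∀ n : ℕ, ∑ j ∈ range (n + 1), α j * α (n - j) = (2 * n + 3) * α (n + 1))
    (hlam : 0 ≤ lam) (ht : lam * t ^ 2 < 2) :
    HasDerivAt (fun t => ∑' i, (-lam) ^ i * α i * t ^ (2 * i + 1))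
      (1 - lam * (∑' i, (-lam) ^ i * α i * t ^ (2 * i + 1)) ^ 2) t := by
  obtain ⟨r, htr, hr⟩ : ∃ r, |t| < r ∧ lam / 2 * r ^ 2 < 1 := by
    have hcont : Continuous fun r : ℝ => lam / 2 * r ^ 2 := by fun_prop
    have hlt : lam / 2 * |t| ^ 2 < 1 := by rw [sq_abs]; linarith
    exact ((eventually_nhdsWithin_of_eventually_nhds
      (hcont.continuousAt.eventually_lt continuousAt_const hlt)).and
        (self_mem_nhdsWithin (s := Ioi |t|))).exists.imp fun r h => ⟨h.2, h.1⟩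
  have hc := abs_neg_pow_mul_alpha_le h0 hα hlam
  have hK : 0 ≤ lam / 2 := by positivity
  have hsum := summable_norm_mul_pow_odd hK hc hr htr.le
  have hdsum := summable_mul_deriv_pow_odd hK hc hr htr.le
  rw [← tsum_deriv_neg_pow_mul_alpha h0 hα hsum hdsum]
  exact hasDerivAt_tsum_mul_pow_odd hK hc hr htr

end PerturbationSeries

theorem perturbation_series_integral_equation_general (α : ℕ → ℝ) (h0 : α 0 = 1)
    (hrec : ∀ i : ℕ, 1 ≤ i →
      α i = (1 / (2 * (i : ℝ) + 1)) * ∑ j ∈ Finset.range i, α j * α (i - 1 - j))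
    (lam T₀ : ℝ) (hlam : 0 ≤ lam) (hconv : lam * T₀ ^ 2 < 2)
    (u : ℝ → ℝ)
    (hu : ∀ t : ℝ, u t = ∑' i : ℕ, (-lam) ^ i * α i * t ^ (2 * i + 1)) :
    ∀ t ∈ Set.Icc (0 : ℝ) T₀, u t = t - lam * ∫ s in (0 : ℝ)..t, (u s) ^ 2 := by
  rintro t ⟨ht₀, htT⟩
  have hderiv : ∀ x ∈ uIcc 0 t, HasDerivAt u (1 - lam * u x ^ 2) x := by
    intro x hx
    rw [uIcc_of_le ht₀] at hx
    rw [funext hu]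
    refine hasDerivAt_tsum_neg_pow_mul_alpha h0 (sum_range_mul_eq_of_rec hrec) hlam ?_
    calc lam * x ^ 2 ≤ lam * T₀ ^ 2 :=
          mul_le_mul_of_nonneg_left (pow_le_pow_left₀ hx.1 (hx.2.trans htT) 2) hlam
      _ < 2 := hconv
  have hcont : ContinuousOn u (uIcc 0 t) :=
    fun x hx => (hderiv x hx).continuousAt.continuousWithinAt
  have hu0 : u 0 = 0 := by simp [hu]
  have hint : IntervalIntegrable (fun s => lam * u s ^ 2) MeasureTheory.volume 0 t :=
    (continuousOn_const.mul (hcont.pow 2)).intervalIntegrable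
  have hftc := intervalIntegral.integral_eq_sub_of_hasDerivAt hderiv
    (intervalIntegrable_const.sub hint)
  rw [intervalIntegral.integral_sub intervalIntegrable_const hint,
    intervalIntegral.integral_const_mul, intervalIntegral.integral_const, hu0] at hftc
  simp only [sub_zero, smul_eq_mul, mul_one] at hftc
  linarith

/-- The perturbation series `u(t) = Σ (−λ)^i α_i t^{2i+1}` satisfies the integral
equation `u(t) = t − λ ∫₀ᵗ u(s)² ds` on `[0, T₀]` whenever `λ ≥ 0` and `λ T₀² < 2`. -/
theorem perturbation_series_integral_equation (α : ℕ → ℝ) (h0 : α 0 = 1)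
    (hrec : ∀ i : ℕ, 1 ≤ i →
      α i = (1 / (2 * (i : ℝ) + 1)) * ∑ j ∈ Finset.range i, α j * α (i - 1 - j))
    (lam T₀ : ℝ) (hlam : 0 ≤ lam) (hT₀ : 0 < T₀) (hconv : lam * T₀ ^ 2 < 2)
    (u : ℝ → ℝ)
    (hu : ∀ t : ℝ, u t = ∑' i : ℕ, (-lam) ^ i * α i * t ^ (2 * i + 1)) :
    ∀ t ∈ Set.Icc (0 : ℝ) T₀, u t = t - lam * ∫ s in (0 : ℝ)..t, (u s) ^ 2 :=
  perturbation_series_integral_equation_general α h0 hrec lam T₀ hlam hconv u hu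
end

section
/- Let T > 0, M_0 > 0, γ ≥ 0, and let (M_i) be the sequence of reals defined by the given M_0 and M_i = T(1 + γ/M_0) Σ_{j=0}^{i−1} M_j M_{i−1−j} for i ≥ 1. Then for every real λ with 0 < λ < 1/(T(12 M_0 + 10 γ)) and every i ≥ 0, λ^i M_i ≤ M_0 / 2^i. -/
/-!
Unwinding the recursion shows that `M i = K^i M₀^(i+1) Cᵢ` with `K = T(1 + γ/M₀)` and `Cᵢ` the
`i`-th Catalan number, since the Catalan numbers satisfy the same convolution recursion.
Hence `λ^i M i = xⁱ Cᵢ M₀` with `x = λ T (M₀ + γ)`, and `Cᵢ ≤ 4ⁱ` together with `8x ≤ 1`, which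
is what the bound on `λ` guarantees, gives `xⁱ Cᵢ ≤ 2⁻ⁱ`.
-/

open Finset

theorem catalan_le_four_pow (n : ℕ) : catalan n ≤ 4 ^ n :=
  calc catalan n = n.centralBinom / (n + 1) := catalan_eq_centralBinom_div n
    _ ≤ n.centralBinom := Nat.div_le_self _ _
    _ ≤ 4 ^ n := Nat.centralBinom_le_four_pow n

theorem eq_pow_mul_pow_mul_catalan_of_convolution {R : Type*} [CommSemiring R] (K a : R)
    (M : ℕ → R) (h0 : M 0 = a)
    (hsucc : ∀ n, M (n + 1) = K * ∑ j ∈ range (n + 1), M j * M (n - j)) (n : ℕ) :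
    M n = K ^ n * a ^ (n + 1) * catalan n := by
  induction n using Nat.strong_induction_on with
  | _ n ih =>
    cases n with
    | zero => simp [h0]
    | succ n =>
      have hterm : ∀ j ∈ range (n + 1), M j * M (n - j) =
          K ^ n * a ^ (n + 2) * (catalan j * catalan (n - j) : ℕ) := by
        intro j hj
        obtain ⟨k, rfl⟩ := Nat.exists_eq_add_of_le (Nat.lt_succ_iff.mp (mem_range.mp hj))
        rw [ih j (by omega), Nat.add_sub_cancel_left, ih k (by omega)]
        push_cast
        ring
      rw [hsucc, sum_congr rfl hterm, ← mul_sum, ← Nat.cast_sum, catalan_succ,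
        ← Fin.sum_univ_eq_sum_range (fun j ↦ catalan j * catalan (n - j))]
      ring

theorem pow_mul_catalan_le_inv_two_pow {x : ℝ} (hx : 0 ≤ x) (h8x : 8 * x ≤ 1) (n : ℕ) :
    x ^ n * catalan n ≤ (2 ^ n)⁻¹ :=
  calc x ^ n * catalan n ≤ x ^ n * 4 ^ n := by
        gcongr
        exact_mod_cast catalan_le_four_pow n
    _ = (4 * x) ^ n := by rw [mul_pow, mul_comm]
    _ ≤ (2⁻¹) ^ n := by gcongr; linarith
    _ = (2 ^ n)⁻¹ := inv_pow 2 n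

/-- Geometric decay of the majorant sequence in the convergence analysis of the
perturbation series: if `M 0 = M₀ > 0` and
`M i = T(1 + γ/M₀) Σ_{j<i} M j · M (i−1−j)` for `i ≥ 1`, then for every
`0 < λ < 1/(T(12M₀ + 10γ))` and every `i`, `λ^i M i ≤ M₀/2^i`. -/
theorem majorant_geometric_decay (T M₀ γ : ℝ) (hT : 0 < T) (hM₀ : 0 < M₀) (hγ : 0 ≤ γ)
    (M : ℕ → ℝ) (hM0 : M 0 = M₀)
    (hrec : ∀ i : ℕ, 1 ≤ i →
      M i = T * (1 + γ / M₀) * ∑ j ∈ Finset.range i, M j * M (i - 1 - j)) :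
    ∀ lam : ℝ, 0 < lam → lam < 1 / (T * (12 * M₀ + 10 * γ)) →
      ∀ i : ℕ, lam ^ i * M i ≤ M₀ / 2 ^ i := by
  intro lam hlam hlam_lt i
  have hclosed := eq_pow_mul_pow_mul_catalan_of_convolution (T * (1 + γ / M₀)) M₀ M hM0
    (fun n ↦ by simpa using hrec (n + 1) n.succ_pos) i
  have hscale : lam ^ i * M i = (lam * (T * (M₀ + γ))) ^ i * catalan i * M₀ := by
    have hK : T * (1 + γ / M₀) * M₀ = T * (M₀ + γ) := by field_simp
    rw [hclosed, ← hK]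
    generalize T * (1 + γ / M₀) = K
    ring
  have hx : 0 ≤ lam * (T * (M₀ + γ)) := by positivity
  have h8x : 8 * (lam * (T * (M₀ + γ))) ≤ 1 := by
    rw [lt_div_iff₀ (by positivity)] at hlam_lt
    nlinarith [mul_nonneg (mul_pos hlam hT).le (by positivity : (0 : ℝ) ≤ 4 * M₀ + 2 * γ)]
  rw [hscale, div_eq_inv_mul]
  exact mul_le_mul_of_nonneg_right (pow_mul_catalan_le_inv_two_pow hx h8x i) hM₀.le
end

section
/- Let T > 0, M_0 > 0, γ ≥ 0, N_0 > 0, and let (N_i) be the sequence of reals defined by the given N_0 and N_i = T(2 M_0 + γ) Σ_{j=0}^{i−1} N_j (4T(M_0 + γ))^{i−1−j} for i ≥ 1. Then for every real λ with 0 < λ < 1/(T(12 M_0 + 10 γ)) and every i ≥ 1, λ^i N_i ≤ N_0 / (3 · 2^i). -/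
/-! Writing `S i = ∑_{j<i} N j a^(i-1-j)`, the convolution obeys the Horner step
`S (i+1) = a S i + N i`, so `N i = c S i` collapses to the first-order recurrence
`N (i+1) = (a + c) N i` for `i ≥ 1`. With `a + c = T(6M₀ + 5γ)` the hypothesis on `λ` says
`λ(a + c) < 1/2`, and `λc ≤ λ(a + c)/3 < 1/6` because `γ ≥ 0`. -/

open Finset

theorem sum_range_succ_mul_pow_sub {R : Type*} [CommSemiring R] (f : ℕ → R) (a : R) (i : ℕ) :
    ∑ j ∈ range (i + 1), f j * a ^ (i - j) = a * ∑ j ∈ range i, f j * a ^ (i - 1 - j) + f i := by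
  rw [sum_range_succ, Nat.sub_self, pow_zero, mul_one, mul_sum]
  congr 1
  refine sum_congr rfl fun j hj => ?_
  rw [show i - j = i - 1 - j + 1 by have := mem_range.1 hj; omega, pow_succ]
  ring

theorem succ_eq_mul_mul_add_pow_of_eq_mul_sum {R : Type*} [CommSemiring R] {N : ℕ → R} {a c : R}
    (hrec : ∀ i, 1 ≤ i → N i = c * ∑ j ∈ range i, N j * a ^ (i - 1 - j)) (k : ℕ) :
    N (k + 1) = c * N 0 * (a + c) ^ k := by
  induction k with
  | zero => simpa using hrec 1 le_rfl
  | succ k ih =>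
    have hstep := hrec (k + 1 + 1) (by omega)
    rw [Nat.add_sub_cancel, sum_range_succ_mul_pow_sub, mul_add, mul_left_comm,
      ← hrec (k + 1) k.succ_pos, ← add_mul, ih] at hstep
    rw [hstep, pow_succ]
    ring

theorem mul_pow_mul_le_div_three_mul_two_pow {x y N₀ : ℝ} (hx : x ≤ 1 / 6) (hy₀ : 0 ≤ y)
    (hy : y ≤ 1 / 2) (hN₀ : 0 ≤ N₀) (k : ℕ) :
    x * y ^ k * N₀ ≤ N₀ / (3 * 2 ^ (k + 1)) :=
  calc x * y ^ k * N₀ ≤ 1 / 6 * (1 / 2) ^ k * N₀ := by gcongr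
    _ = N₀ / (3 * 2 ^ (k + 1)) := by rw [one_div_pow, pow_succ]; field_simp; ring

theorem derivative_majorant_geometric_decay_general (T M₀ γ N₀ : ℝ)
    (hT : 0 < T) (hγ : 0 ≤ γ) (hN₀ : 0 < N₀)
    (N : ℕ → ℝ) (hN0 : N 0 = N₀)
    (hrec : ∀ i : ℕ, 1 ≤ i →
      N i = T * (2 * M₀ + γ) * ∑ j ∈ Finset.range i, N j * (4 * T * (M₀ + γ)) ^ (i - 1 - j)) :
    ∀ lam : ℝ, 0 < lam → lam < 1 / (T * (12 * M₀ + 10 * γ)) →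
      ∀ i : ℕ, 1 ≤ i → lam ^ i * N i ≤ N₀ / (3 * 2 ^ i) := by
  intro lam hlam hlam_lt i hi
  obtain ⟨k, rfl⟩ : ∃ k, i = k + 1 := ⟨i - 1, by omega⟩
  -- `1 / 0 = 0` in Lean, so this positivity is forced by `0 < lam`.
  have hpos : 0 < T * (12 * M₀ + 10 * γ) := one_div_pos.1 (hlam.trans hlam_lt)
  have hsmall : lam * (T * (12 * M₀ + 10 * γ)) < 1 := (lt_div_iff₀ hpos).1 hlam_lt
  have hlam_pos : 0 < lam * (T * (12 * M₀ + 10 * γ)) := mul_pos hlam hpos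
  have hTγ : 0 ≤ lam * T * γ := by positivity
  rw [succ_eq_mul_mul_add_pow_of_eq_mul_sum hrec k, hN0]
  calc lam ^ (k + 1) * (T * (2 * M₀ + γ) * N₀ * (4 * T * (M₀ + γ) + T * (2 * M₀ + γ)) ^ k)
      = lam * (T * (2 * M₀ + γ)) * (lam * (4 * T * (M₀ + γ) + T * (2 * M₀ + γ))) ^ k * N₀ := by
        rw [mul_pow, pow_succ]
        ring
    _ ≤ N₀ / (3 * 2 ^ (k + 1)) :=
        mul_pow_mul_le_div_three_mul_two_pow (by linarith) (by linarith) (by linarith) hN₀.le k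

/-- Geometric decay of the majorant sequence bounding the time derivatives of the
perturbation terms: if `N 0 = N₀ > 0` and
`N i = T(2M₀ + γ) Σ_{j<i} N j · (4T(M₀ + γ))^{i−1−j}` for `i ≥ 1`, then for every
`0 < λ < 1/(T(12M₀ + 10γ))` and every `i ≥ 1`, `λ^i N i ≤ N₀/(3·2^i)`. -/
theorem derivative_majorant_geometric_decay (T M₀ γ N₀ : ℝ)
    (hT : 0 < T) (hM₀ : 0 < M₀) (hγ : 0 ≤ γ) (hN₀ : 0 < N₀)
    (N : ℕ → ℝ) (hN0 : N 0 = N₀)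
    (hrec : ∀ i : ℕ, 1 ≤ i →
      N i = T * (2 * M₀ + γ) * ∑ j ∈ Finset.range i, N j * (4 * T * (M₀ + γ)) ^ (i - 1 - j)) :
    ∀ lam : ℝ, 0 < lam → lam < 1 / (T * (12 * M₀ + 10 * γ)) →
      ∀ i : ℕ, 1 ≤ i → lam ^ i * N i ≤ N₀ / (3 * 2 ^ i) :=
  derivative_majorant_geometric_decay_general T M₀ γ N₀ hT hγ hN₀ N hN0 hrec
end
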